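/- arXiv:2306.16072 — 2 statements merged into one kernel-verified Lean document; each statement's English description precedes it below -/
import Mathlib

section
/- In the setting above, if x(G) lies in F_{q^{k'}} and k' is the least such degree, then the Frobenius eigenvalue λ has order exactly k' in the quotient group (ℤ/ℓℤ)^×/{±1}. -/
/-- If the x-coordinate of a kernel generator G of prime order ℓ lies in
F_{q^{k'}} with k' minimal (modelled by an x-map identifying ±P and a
Frobenius φ on the field of x-coordinates), then the Frobenius eigenvalue λ
has order exactly k' in `(ℤ/ℓℤ)ˣ/{±1}`. -/
theorem stmt7 {E F : Type*} [AddCommGroup E] [Field F]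
    (ℓ : ℕ) (hℓ : ℓ.Prime) (hodd : Odd ℓ)
    (G : E) (hG : addOrderOf G = ℓ)
    (x : E → F) (hx : ∀ P Q : E, x P = x Q ↔ (P = Q ∨ P = -Q))
    (π : E →+ E) (φ : F → F) (hcompat : ∀ P : E, x (π P) = φ (x P))
    (lam : (ZMod ℓ)ˣ)
    (hπ : ∀ P ∈ AddSubgroup.zmultiples G, π P = ((lam : ZMod ℓ)).val • P)
    (k' : ℕ) (hk' : 0 < k')
    (hfix : φ^[k'] (x G) = x G)
    (hmin : ∀ j : ℕ, 0 < j → φ^[j] (x G) = x G → k' ≤ j) :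
    orderOf
      (QuotientGroup.mk lam : (ZMod ℓ)ˣ ⧸ Subgroup.zpowers (-1 : (ZMod ℓ)ˣ)) = k' := by
  have : NeZero ℓ := ⟨hℓ.ne_zero⟩
  -- integer smul kills G iff cast to ZMod ℓ is zero
  have hz : ∀ n : ℤ, n • G = 0 ↔ (n : ZMod ℓ) = 0 := by
    intro n
    rw [← addOrderOf_dvd_iff_zsmul_eq_zero, hG, ZMod.intCast_zmod_eq_zero_iff_dvd]
  have hzero : ℓ • G = 0 := hG ▸ addOrderOf_nsmul_eq_zero G
  have hcast : ∀ a : ZMod ℓ, ((a.val : ℤ) : ZMod ℓ) = a := by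
    intro a; simp [ZMod.natCast_val, ZMod.cast_id]
  -- nsmul depends only on cast mod ℓ
  have hns : ∀ n : ℕ, n • G = ((n : ZMod ℓ)).val • G := by
    intro n
    rw [ZMod.val_natCast]
    conv_lhs => rw [← Nat.mod_add_div n ℓ]
    rw [add_nsmul, mul_nsmul, hzero, smul_zero, add_zero]
  -- iterate of π on G
  have hiter : ∀ j : ℕ, π^[j] G = (((lam ^ j : (ZMod ℓ)ˣ) : ZMod ℓ)).val • G := by
    intro j
    induction j with
    | zero => simp [ZMod.val_one_eq_one_mod, Nat.one_mod_eq_one.mpr hℓ.one_lt.ne']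
    | succ j ih =>
      rw [Function.iterate_succ_apply', ih,
        hπ _ (AddSubgroup.nsmul_mem _ (AddSubgroup.mem_zmultiples G) _),
        ← mul_nsmul, hns]
      congr 2
      push_cast [ZMod.natCast_val, ZMod.cast_id]
      ring
  -- a.val • G = G ↔ a = 1 ; = -G ↔ a = -1
  have hval : ∀ a : ZMod ℓ, (a.val • G = G ↔ a = 1) ∧ (a.val • G = -G ↔ a = -1) := by
    intro a
    have e1 : a.val • G - G = ((a.val : ℤ) - 1) • G := by
      rw [sub_smul, natCast_zsmul, one_smul]
    have e2 : a.val • G + G = ((a.val : ℤ) + 1) • G := by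
      rw [add_smul, natCast_zsmul, one_smul]
    constructor
    · rw [← sub_eq_zero, e1, hz, Int.cast_sub, hcast, Int.cast_one, sub_eq_zero]
    · rw [eq_neg_iff_add_eq_zero, e2, hz, Int.cast_add, hcast, Int.cast_one,
        ← eq_neg_iff_add_eq_zero]
  -- membership in zpowers (-1) is being ±1
  have hmem : ∀ u : (ZMod ℓ)ˣ, u ∈ Subgroup.zpowers (-1 : (ZMod ℓ)ˣ) ↔ u = 1 ∨ u = -1 := by
    intro u
    constructor
    · rintro ⟨k, rfl⟩
      rcases Int.even_or_odd k with he | ho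
      · left; simpa using (Even.neg_one_zpow he)
      · right
        obtain ⟨m, rfl⟩ := ho
        show (-1 : (ZMod ℓ)ˣ) ^ (2 * m + 1) = -1
        rw [zpow_add, zpow_one, zpow_mul,
          show (-1 : (ZMod ℓ)ˣ) ^ (2 : ℤ) = 1 by rw [zpow_two]; simp,
          one_zpow, one_mul]
    · rintro (rfl | rfl)
      exacts [⟨0, by simp⟩, ⟨1, by simp⟩]
  -- main equivalence
  have hkey : ∀ j : ℕ, φ^[j] (x G) = x G ↔
      (QuotientGroup.mk lam : (ZMod ℓ)ˣ ⧸ Subgroup.zpowers (-1 : (ZMod ℓ)ˣ)) ^ j = 1 := by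
    intro j
    have hc : φ^[j] (x G) = x (π^[j] G) := by
      induction j with
      | zero => rfl
      | succ j ih =>
        rw [Function.iterate_succ_apply', Function.iterate_succ_apply', ih, hcompat]
    rw [hc, hiter, hx, ← QuotientGroup.mk_pow, QuotientGroup.eq_one_iff, hmem,
      (hval _).1, (hval _).2]
    constructor
    · rintro (h | h)
      · left; ext; simpa using h
      · right; ext; simpa using h
    · rintro (h | h) <;> simp [h]
  rw [orderOf_eq_iff hk']
  refine ⟨(hkey k').mp hfix, fun m hm hm0 hc => ?_⟩
  exact absurd (hmin m hm0 ((hkey m).mpr hc)) (not_le.mpr hm)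
end

section
/- Let E be an elliptic curve over F_q with q-power Frobenius π, and let k be even. Then every point P in the kernel of Φ_k(π) (where Φ_k is the k-th cyclotomic polynomial) satisfies π^{k/2}(P) = −P; consequently x(P) ∈ F_{q^{k/2}}. -/
/-! Since `n` is a proper divisor of `2n`, `(X^n - 1) * Φ_{2n}` divides
`X^{2n} - 1 = (X^n - 1)(X^n + 1)`; cancelling the monic factor gives `Φ_{2n} ∣ X^n + 1`, so
`π^{k/2} + 1` kills `ker Φ_k(π)`. Applying `x`, which turns `π` into `φ` and is even, gives the
statement about `x(P)`. -/

open Polynomial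

theorem Polynomial.cyclotomic_two_mul_dvd_X_pow_add_one (R : Type*) [CommRing R] (n : ℕ) :
    cyclotomic (2 * n) R ∣ X ^ n + 1 := by
  rcases Nat.eq_zero_or_pos n with rfl | hn
  · simp
  have hmem : n ∈ (2 * n).properDivisors :=
    Nat.mem_properDivisors.mpr ⟨dvd_mul_left n 2, by omega⟩
  have h := X_pow_sub_one_mul_cyclotomic_dvd_X_pow_sub_one_of_dvd R hmem
  rw [show (X : R[X]) ^ (2 * n) - 1 = (X ^ n - 1) * (X ^ n + 1) by ring] at h
  exact ((monic_X_pow_sub_C (1 : R) hn.ne').isRegular.left.dvd_cancel_left).mp h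

theorem Polynomial.aeval_smul_eq_zero_of_dvd {R A M : Type*} [CommSemiring R] [Semiring A]
    [Algebra R A] [AddCommMonoid M] [Module A M] {p q : R[X]} (hpq : p ∣ q) (a : A) {m : M}
    (hm : aeval a p • m = 0) : aeval a q • m = 0 := by
  obtain ⟨r, rfl⟩ := hpq
  rw [mul_comm, map_mul, mul_smul, hm, smul_zero]

theorem stmt13_general {E F : Type*} [AddCommGroup E] (k : ℕ) (hk : Even k)
    (π : AddMonoid.End E) (P : E)
    (hP : Polynomial.aeval π (Polynomial.cyclotomic k ℤ) P = 0)
    (x : E → F) (φ : F → F)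
    (hcompat : ∀ Q : E, x (π Q) = φ (x Q))
    (hneg : ∀ Q : E, x (-Q) = x Q) :
    (π ^ (k / 2)) P = -P ∧ φ^[k / 2] (x P) = x P := by
  obtain ⟨n, rfl⟩ := hk
  rw [← two_mul] at hP ⊢
  rw [Nat.mul_div_cancel_left n two_pos]
  have hkill : aeval π (X ^ n + 1 : ℤ[X]) • P = 0 :=
    aeval_smul_eq_zero_of_dvd (cyclotomic_two_mul_dvd_X_pow_add_one ℤ n) π hP
  have hπP : (π ^ n) P = -P := by
    simp only [map_add, map_pow, aeval_X, map_one, AddMonoid.End.smul_def] at hkill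
    exact eq_neg_of_add_eq_zero_left hkill
  refine ⟨hπP, ?_⟩
  have hsemiconj : Function.Semiconj x ⇑(π ^ n) φ^[n] := by
    rw [AddMonoid.End.coe_pow]
    exact Function.Semiconj.iterate_right hcompat n
  rw [← hsemiconj P, hπP, hneg]

/-- For k even, every point P in the kernel of Φ_k(π) (π the Frobenius
endomorphism of the group of points, Φ_k the k-th cyclotomic polynomial)
satisfies π^{k/2}(P) = −P; consequently, since negation preserves the
x-coordinate and x intertwines π with the field Frobenius φ,
x(P) ∈ F_{q^{k/2}}, i.e. φ^{k/2}(x(P)) = x(P). -/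
theorem stmt13 {E F : Type*} [AddCommGroup E] (k : ℕ) (hk : Even k) (hk0 : 0 < k)
    (π : AddMonoid.End E) (P : E)
    (hP : Polynomial.aeval π (Polynomial.cyclotomic k ℤ) P = 0)
    (x : E → F) (φ : F → F)
    (hcompat : ∀ Q : E, x (π Q) = φ (x Q))
    (hneg : ∀ Q : E, x (-Q) = x Q) :
    (π ^ (k / 2)) P = -P ∧ φ^[k / 2] (x P) = x P :=
  stmt13_general k hk π P hP x φ hcompat hneg
end
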